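/- arXiv:2208.06490 — 8 statements merged into one kernel-verified Lean document; each statement's English description precedes it below -/
import Mathlib

section
/- Let n ≥ m ≥ 0 be integers, τ > 0, and let a_0,…,a_{n-1}, b_0,…,b_m be real numbers. Consider the entire function Δ : ℂ → ℂ given by Δ(s) = s^n + Σ_{k=0}^{n-1} a_k s^k + e^{-sτ} Σ_{k=0}^{m} b_k s^k. Then no point s_0 ∈ ℂ is a root of Δ of multiplicity greater than n + m + 1; that is, there is no s_0 ∈ ℂ such that the iterated derivatives Δ^{(j)}(s_0) vanish for all j = 0, 1, …, n + m + 1. -/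
/-!
Write `Δ(s) = P(s) + e^{cs} Q(s)` with `c = -τ ≠ 0`, `P` monic of degree `n` and `deg Q ≤ m`.
Then `Δ^{(j)}(s) = P^{(j)}(s) + e^{cs} ((D + c)^j Q)(s)`. For `n < j ≤ n + m + 1` the polynomial
part is gone, so `R = (D + c)^{n+1} Q`, of degree `≤ m`, has `((D + c)^i R)(s₀) = 0` for `i ≤ m`.
Since `D = (D + c) - c`, also `R^{(i)}(s₀) = 0` for `i ≤ m`, so `R = 0`, and `Q = 0` because `D + c`
is injective on polynomials. Then `P` vanishes to order `n + 1` at `s₀`, impossible for a nonzero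
polynomial of degree `n`.
-/

open Polynomial Complex

theorem Module.End.map_pow_apply_eq_zero_of_map_add_smul_one_pow_apply_eq_zero
    {R M N : Type*} [CommRing R] [AddCommGroup M] [Module R M] [AddCommGroup N] [Module R N]
    (T : Module.End R M) (c : R) (φ : M →ₗ[R] N) {m : ℕ} {x : M}
    (h : ∀ i ≤ m, φ (((T + c • 1) ^ i) x) = 0) : ∀ k ≤ m, φ ((T ^ k) x) = 0 := by
  induction m generalizing x with
  | zero =>
    intro k hk
    simpa [Nat.le_zero.mp hk] using h 0 le_rfl
  | succ m ih =>
    have hTx : ∀ i ≤ m, φ (((T + c • 1) ^ i) (T x)) = 0 := by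
      intro i hi
      have hshift : ((T + c • 1) ^ i) (T x)
          = ((T + c • 1) ^ (i + 1)) x - c • ((T + c • 1) ^ i) x := by
        rw [pow_succ, Module.End.mul_apply, LinearMap.add_apply, map_add]
        simp
      rw [hshift, map_sub, map_smul, h i (by omega), h (i + 1) (by omega), smul_zero, sub_zero]
    rintro (_ | k) hk
    · simpa using h 0 (Nat.zero_le _)
    · rw [pow_succ, Module.End.mul_apply]
      exact ih hTx k (by omega)

namespace Polynomial

variable {R : Type*}

theorem eq_zero_of_isRoot_iterate_derivative [CommRing R] [IsDomain R] [CharZero R]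
    {p : R[X]} {t : R} {m : ℕ} (hp : p.natDegree ≤ m)
    (h : ∀ k ≤ m, (derivative^[k] p).IsRoot t) : p = 0 := by
  by_contra hp0
  have hmult := lt_rootMultiplicity_of_isRoot_iterate_derivative hp0 h
  classical
  have : p.rootMultiplicity t ≤ p.natDegree :=
    count_roots (a := t) p ▸ (Multiset.count_le_card _ _).trans (card_roots' p)
  omega

section TwistedDerivative

variable [CommRing R]

/-- `D + c`, i.e. differentiation conjugated by `s ↦ e^{cs}`. -/
noncomputable def twistedDerivative (c : R) : Module.End R R[X] := derivative + c • 1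

theorem twistedDerivative_apply (c : R) (p : R[X]) :
    twistedDerivative c p = derivative p + c • p := rfl

theorem natDegree_twistedDerivative_le (c : R) (p : R[X]) :
    (twistedDerivative c p).natDegree ≤ p.natDegree :=
  (natDegree_add_le _ _).trans <| max_le (natDegree_derivative_le p |>.trans (Nat.sub_le _ _))
    (natDegree_smul_le _ _)

theorem natDegree_twistedDerivative_pow_apply_le (c : R) (p : R[X]) (j : ℕ) :
    ((twistedDerivative c ^ j) p).natDegree ≤ p.natDegree := by
  induction j with
  | zero => simp
  | succ j ih =>
    rw [pow_succ', Module.End.mul_apply]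
    exact (natDegree_twistedDerivative_le c _).trans ih

theorem twistedDerivative_injective [IsDomain R] {c : R} (hc : c ≠ 0) :
    Function.Injective (twistedDerivative c) := by
  refine (injective_iff_map_eq_zero _).2 fun p hp => ?_
  by_contra hp0
  have hdeg : (c • p).degree = p.degree := by rw [smul_eq_C_mul, degree_C_mul hc]
  have := congrArg degree hp
  rw [twistedDerivative_apply, degree_add_eq_right_of_degree_lt (hdeg ▸ degree_derivative_lt hp0),
    hdeg, degree_zero, degree_eq_bot] at this
  exact hp0 this

theorem eq_zero_of_eval_twistedDerivative_pow_eq_zero [IsDomain R] [CharZero R] {c : R}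
    (hc : c ≠ 0) {p : R[X]} {t : R} {m N : ℕ} (hp : p.natDegree ≤ m)
    (h : ∀ i ≤ m, ((twistedDerivative c ^ (i + N)) p).eval t = 0) : p = 0 := by
  set q := (twistedDerivative c ^ N) p
  have hq : ∀ i ≤ m, leval t ((twistedDerivative c ^ i) q) = 0 := fun i hi => by
    simpa [q, pow_add] using h i hi
  have hq0 : q = 0 := by
    refine eq_zero_of_isRoot_iterate_derivative (t := t)
      ((natDegree_twistedDerivative_pow_apply_le c p N).trans hp) fun k hk => ?_
    simpa [Module.End.pow_apply] using
      Module.End.map_pow_apply_eq_zero_of_map_add_smul_one_pow_apply_eq_zero derivative c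
        (leval t) hq k hk
  have hinj : Function.Injective (twistedDerivative c ^ N) := by
    rw [Module.End.coe_pow]
    exact (twistedDerivative_injective hc).iterate N
  exact hinj (hq0.trans (map_zero _).symm)

end TwistedDerivative

end Polynomial

noncomputable def quasipolynomial (c : ℂ) (P Q : ℂ[X]) (s : ℂ) : ℂ :=
  P.eval s + exp (c * s) * Q.eval s

theorem hasDerivAt_quasipolynomial (c : ℂ) (P Q : ℂ[X]) (s : ℂ) :
    HasDerivAt (quasipolynomial c P Q)
      (quasipolynomial c (derivative P) (twistedDerivative c Q) s) s := by
  have hexp : HasDerivAt (fun s => exp (c * s)) (exp (c * s) * c) s := by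
    simpa using ((hasDerivAt_id s).const_mul c).cexp
  refine ((P.hasDerivAt s).add (hexp.mul (Q.hasDerivAt s))).congr_deriv ?_
  simp only [quasipolynomial, twistedDerivative_apply, eval_add, eval_smul, smul_eq_mul]
  ring

theorem iteratedDeriv_quasipolynomial (c : ℂ) (P Q : ℂ[X]) (j : ℕ) :
    iteratedDeriv j (quasipolynomial c P Q)
      = quasipolynomial c (derivative^[j] P) ((twistedDerivative c ^ j) Q) := by
  induction j generalizing P Q with
  | zero => rw [iteratedDeriv_zero, Function.iterate_zero_apply, pow_zero, Module.End.one_apply]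
  | succ j ih =>
    have hderiv : deriv (quasipolynomial c P Q)
        = quasipolynomial c (derivative P) (twistedDerivative c Q) :=
      funext fun s => (hasDerivAt_quasipolynomial c P Q s).deriv
    rw [iteratedDeriv_succ', hderiv, ih, Function.iterate_succ_apply, pow_succ,
      Module.End.mul_apply]

theorem eq_zero_of_iteratedDeriv_quasipolynomial_eq_zero {c : ℂ} (hc : c ≠ 0) {P Q : ℂ[X]}
    {n m : ℕ} (hP : P.natDegree ≤ n) (hQ : Q.natDegree ≤ m) {s₀ : ℂ}
    (h : ∀ j ≤ n + m + 1, iteratedDeriv j (quasipolynomial c P Q) s₀ = 0) : P = 0 ∧ Q = 0 := by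
  simp only [iteratedDeriv_quasipolynomial, quasipolynomial] at h
  have hQ0 : Q = 0 := by
    refine eq_zero_of_eval_twistedDerivative_pow_eq_zero hc hQ (t := s₀) (N := n + 1)
      fun i hi => ?_
    have hj := h (i + (n + 1)) (by omega)
    rwa [iterate_derivative_eq_zero (by omega), eval_zero, zero_add, mul_eq_zero,
      or_iff_right (exp_ne_zero _)] at hj
  refine ⟨eq_zero_of_isRoot_iterate_derivative (t := s₀) hP fun k hk => ?_, hQ0⟩
  simpa [hQ0] using h k (by omega)

theorem no_root_of_multiplicity_gt_degree_general
    (n m : ℕ) (τ : ℝ) (hτ : 0 < τ) (a b : ℕ → ℝ) :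
    ¬ ∃ s₀ : ℂ, ∀ j ≤ n + m + 1,
      iteratedDeriv j
        (fun s : ℂ => s ^ n + (∑ k ∈ Finset.range n, (a k : ℂ) * s ^ k)
          + Complex.exp (-s * (τ : ℂ)) * ∑ k ∈ Finset.range (m + 1), (b k : ℂ) * s ^ k)
        s₀ = 0 := by
  rintro ⟨s₀, h⟩
  set P : ℂ[X] := X ^ n + ∑ k ∈ Finset.range n, C (a k : ℂ) * X ^ k
  set Q : ℂ[X] := ∑ k ∈ Finset.range (m + 1), C (b k : ℂ) * X ^ k
  have hlower : (∑ k ∈ Finset.range n, C (a k : ℂ) * X ^ k).degree < (n : WithBot ℕ) := by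
    simp_rw [← Fin.sum_univ_eq_sum_range, degree_sum_fin_lt]
  have hPn : P.natDegree = n := by
    rw [natDegree_add_eq_left_of_degree_lt (by rwa [degree_X_pow]), natDegree_X_pow]
  have hQm : Q.natDegree ≤ m := natDegree_sum_le_of_forall_le _ _ fun k hk =>
    (natDegree_C_mul_X_pow_le _ _).trans (Finset.mem_range_succ_iff.mp hk)
  have hΔ : (fun s : ℂ => s ^ n + (∑ k ∈ Finset.range n, (a k : ℂ) * s ^ k)
        + exp (-s * (τ : ℂ)) * ∑ k ∈ Finset.range (m + 1), (b k : ℂ) * s ^ k)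
      = quasipolynomial (-τ) P Q := by
    funext s
    rw [show -s * (τ : ℂ) = -τ * s by ring]
    simp only [quasipolynomial, P, Q, eval_add, eval_pow, eval_X, eval_finsetSum, eval_mul, eval_C]
  rw [hΔ] at h
  have hτ' : (-τ : ℂ) ≠ 0 := by exact_mod_cast neg_ne_zero.mpr hτ.ne'
  exact (monic_X_pow_add hlower).ne_zero
    (eq_zero_of_iteratedDeriv_quasipolynomial_eq_zero hτ' hPn.le hQm h).1

/-- The characteristic quasipolynomial
`Δ(s) = s^n + ∑_{k=0}^{n-1} a_k s^k + e^{-sτ} ∑_{k=0}^{m} b_k s^k`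
of a delay-differential equation with `n ≥ m ≥ 0` and delay `τ > 0`
has no root of multiplicity greater than `n + m + 1`. -/
theorem no_root_of_multiplicity_gt_degree
    (n m : ℕ) (hnm : m ≤ n) (τ : ℝ) (hτ : 0 < τ) (a b : ℕ → ℝ) :
    ¬ ∃ s₀ : ℂ, ∀ j ≤ n + m + 1,
      iteratedDeriv j
        (fun s : ℂ => s ^ n + (∑ k ∈ Finset.range n, (a k : ℂ) * s ^ k)
          + Complex.exp (-s * (τ : ℂ)) * ∑ k ∈ Finset.range (m + 1), (b k : ℂ) * s ^ k)
        s₀ = 0 :=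
  no_root_of_multiplicity_gt_degree_general n m τ hτ a b
end

section
/- Let n ≥ m ≥ 0 be integers, τ > 0, s_0 ∈ ℝ, and let a_0,…,a_{n-1} be fixed real numbers. For (b_0,…,b_m) ∈ ℝ^{m+1} write Δ_b(s) = s^n + Σ_{k=0}^{n-1} a_k s^k + e^{-sτ} Σ_{k=0}^{m} b_k s^k, and let (b_0*,…,b_m*) be the unique tuple satisfying Δ_{b*}^{(j)}(s_0) = 0 for j = 0,…,m. Then there exist real coefficients b_0,…,b_m such that s_0 is a root of Δ_b of multiplicity at least m + 2 if and only if Δ_{b*}^{(m+1)}(s_0) = 0; moreover, in that case the tuple b must equal b*. -/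
/-! Write `Δ_b = q + e^{-sτ} P_b` with `P_b = ∑ b_k s^k`. The conditions `Δ_b^{(j)}(s₀) = 0`,
`j ≤ m`, fix the `m`-jet of `e^{-sτ} P_b` at `s₀`, hence, multiplying by `e^{sτ}` (Leibniz), the
`m`-jet of `P_b`. Two such polynomials of degree `≤ m` differ by one with a root of multiplicity
`> m` at `s₀`, i.e. by zero. So `b*` is the only tuple satisfying the first `m + 1` conditions,
and some `b` satisfies all `m + 2` of them iff `b*` satisfies the last one. -/

open Polynomial

section Leibniz

variable {𝕜 𝔸 : Type*} [NontriviallyNormedField 𝕜] [NormedRing 𝔸] [NormedAlgebra 𝕜 𝔸]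

theorem iteratedDeriv_mul_eq_zero_of_forall_le {f g : 𝕜 → 𝔸} {x : 𝕜} {m : ℕ}
    (hf : ContDiffAt 𝕜 m f x) (hg : ContDiffAt 𝕜 m g x)
    (h : ∀ j ≤ m, iteratedDeriv j f x = 0) :
    ∀ j ≤ m, iteratedDeriv j (f * g) x = 0 := by
  intro j hj
  have hjm : (j : WithTop ℕ∞) ≤ m := by exact_mod_cast hj
  rw [iteratedDeriv_mul (hf.of_le hjm) (hg.of_le hjm)]
  refine Finset.sum_eq_zero fun i hi => ?_
  rw [h i (by grind), mul_zero, zero_mul]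

end Leibniz

section Polynomial

variable {𝕜 : Type*} [NontriviallyNormedField 𝕜]

theorem Polynomial.iteratedDeriv_eval (p : 𝕜[X]) (j : ℕ) :
    iteratedDeriv j (fun x => p.eval x) = fun x => (derivative^[j] p).eval x := by
  induction j generalizing p with
  | zero => rfl
  | succ j ih =>
    have hderiv : deriv (fun x => p.eval x) = fun x => (derivative p).eval x := by
      ext x; exact p.deriv
    rw [iteratedDeriv_succ', hderiv, ih, Function.iterate_succ_apply]

theorem Polynomial.eq_zero_of_iteratedDeriv_eval_eq_zero [CharZero 𝕜] {p : 𝕜[X]} {m : ℕ} {x₀ : 𝕜}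
    (hp : p.natDegree ≤ m) (h : ∀ j ≤ m, iteratedDeriv j (fun x => p.eval x) x₀ = 0) :
    p = 0 := by
  classical
  by_contra hp0
  have hmult : m < p.rootMultiplicity x₀ :=
    lt_rootMultiplicity_of_isRoot_iterate_derivative hp0 fun j hj => by
      simpa [IsRoot, iteratedDeriv_eval] using h j hj
  have hle : p.rootMultiplicity x₀ ≤ p.natDegree :=
    count_roots (a := x₀) p ▸ (Multiset.count_le_card _ _).trans (card_roots' p)
  omega

end Polynomial

theorem eq_zero_of_iteratedDeriv_cexp_mul_eval_eq_zero {τ x₀ : ℂ} {p : ℂ[X]} {m : ℕ}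
    (hp : p.natDegree ≤ m)
    (h : ∀ j ≤ m, iteratedDeriv j (fun s => Complex.exp (-s * τ) * p.eval s) x₀ = 0) :
    p = 0 := by
  refine eq_zero_of_iteratedDeriv_eval_eq_zero (x₀ := x₀) hp ?_
  have hp_eval : (fun s => p.eval s)
      = (fun s => Complex.exp (-s * τ) * p.eval s) * fun s => Complex.exp (s * τ) := by
    funext s
    simp only [Pi.mul_apply]
    rw [mul_right_comm, ← Complex.exp_add]
    simp
  have hp_smooth : ContDiff ℂ m (fun s => p.eval s) := by
    simpa using p.contDiff_aeval (𝕜 := ℂ) m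
  rw [hp_eval]
  exact iteratedDeriv_mul_eq_zero_of_forall_le (by fun_prop) (by fun_prop) h

theorem eq_of_iteratedDeriv_cexp_mul_sum_eq {τ x₀ : ℂ} {m : ℕ} {c c' : Fin (m + 1) → ℂ}
    (h : ∀ j ≤ m,
      iteratedDeriv j (fun s => Complex.exp (-s * τ) * ∑ k, c k * s ^ (k : ℕ)) x₀
        = iteratedDeriv j (fun s => Complex.exp (-s * τ) * ∑ k, c' k * s ^ (k : ℕ)) x₀) :
    c = c' := by
  set p := (degreeLTEquiv ℂ (m + 1)).symm (c - c')
  have hp_eval (s : ℂ) : (p : ℂ[X]).eval s = ∑ k, (c - c') k * s ^ (k : ℕ) := by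
    rw [eval_eq_sum_degreeLTEquiv p.2, Subtype.coe_eta, LinearEquiv.apply_symm_apply]
  have hp_deg : (p : ℂ[X]).natDegree ≤ m := by
    have hp_mem : (p : ℂ[X]) ∈ degreeLE ℂ m := (degreeLT_succ_eq_degreeLE (R := ℂ)) ▸ p.2
    exact natDegree_le_iff_degree_le.mpr (mem_degreeLE.mp hp_mem)
  have hp_zero : (p : ℂ[X]) = 0 := by
    refine eq_zero_of_iteratedDeriv_cexp_mul_eval_eq_zero (τ := τ) (x₀ := x₀) hp_deg fun j hj => ?_
    have hdiff : (fun s => Complex.exp (-s * τ) * (p : ℂ[X]).eval s)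
        = (fun s => Complex.exp (-s * τ) * ∑ k, c k * s ^ (k : ℕ))
          - fun s => Complex.exp (-s * τ) * ∑ k, c' k * s ^ (k : ℕ) := by
      ext s
      simp only [hp_eval, Pi.sub_apply, sub_mul, Finset.sum_sub_distrib, mul_sub]
    rw [hdiff, iteratedDeriv_sub (by fun_prop) (by fun_prop), h j hj, sub_self]
  simpa [sub_eq_zero, p] using hp_zero

theorem admissibility_criterion_general
    (n m : ℕ) (τ : ℝ) (s₀ : ℝ) (a : ℕ → ℝ)
    (Δ : (Fin (m + 1) → ℝ) → ℂ → ℂ)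
    (hΔ : ∀ b s, Δ b s = s ^ n + (∑ k ∈ Finset.range n, (a k : ℂ) * s ^ k)
      + Complex.exp (-s * (τ : ℂ)) * ∑ k : Fin (m + 1), (b k : ℂ) * s ^ (k : ℕ))
    (bstar : Fin (m + 1) → ℝ)
    (hbstar : ∀ j ≤ m, iteratedDeriv j (Δ bstar) (s₀ : ℂ) = 0) :
    ((∃ b : Fin (m + 1) → ℝ, ∀ j ≤ m + 1, iteratedDeriv j (Δ b) (s₀ : ℂ) = 0)
        ↔ iteratedDeriv (m + 1) (Δ bstar) (s₀ : ℂ) = 0)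
      ∧ ∀ b : Fin (m + 1) → ℝ,
          (∀ j ≤ m + 1, iteratedDeriv j (Δ b) (s₀ : ℂ) = 0) → b = bstar := by
  set q : ℂ → ℂ := fun s => s ^ n + ∑ k ∈ Finset.range n, (a k : ℂ) * s ^ k
  have hsplit (b : Fin (m + 1) → ℝ) (j : ℕ) : iteratedDeriv j (Δ b) s₀ = iteratedDeriv j q s₀
      + iteratedDeriv j (fun s => Complex.exp (-s * τ) * ∑ k, (b k : ℂ) * s ^ (k : ℕ)) s₀ := by
    rw [funext (hΔ b), ← iteratedDeriv_add (by fun_prop) (by fun_prop)]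
    rfl
  have hunique (b : Fin (m + 1) → ℝ) (hb : ∀ j ≤ m + 1, iteratedDeriv j (Δ b) s₀ = 0) :
      b = bstar := by
    have hcoeff : (fun k => (b k : ℂ)) = fun k => (bstar k : ℂ) := by
      refine eq_of_iteratedDeriv_cexp_mul_sum_eq (τ := τ) (x₀ := s₀) fun j hj => ?_
      have hbj := hb j (hj.trans m.le_succ)
      have hbstarj := hbstar j hj
      rw [hsplit] at hbj hbstarj
      linear_combination hbj - hbstarj
    exact funext fun k => Complex.ofReal_injective (congrFun hcoeff k)
  refine ⟨⟨fun ⟨b, hb⟩ => hunique b hb ▸ hb (m + 1) le_rfl, fun h => ⟨bstar, fun j hj => ?_⟩⟩,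
    hunique⟩
  rcases hj.lt_or_eq with hj | rfl
  exacts [hbstar j (Nat.lt_succ_iff.mp hj), h]

/-- Let `n ≥ m ≥ 0`, `τ > 0`, `s₀ ∈ ℝ`, and fix real coefficients
`a_0, …, a_{n-1}`. For a tuple `b = (b_0, …, b_m)` write
`Δ_b(s) = s^n + ∑_{k=0}^{n-1} a_k s^k + e^{-sτ} ∑_{k=0}^{m} b_k s^k`,
and let `b*` be the (unique) tuple with `Δ_{b*}^{(j)}(s₀) = 0` for `j = 0, …, m`.
Then some choice of `b` makes `s₀` a root of `Δ_b` of multiplicity at least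
`m + 2` if and only if `Δ_{b*}^{(m+1)}(s₀) = 0`; moreover, in that case the
tuple `b` must equal `b*`. -/
theorem admissibility_criterion
    (n m : ℕ) (hnm : m ≤ n) (τ : ℝ) (hτ : 0 < τ) (s₀ : ℝ) (a : ℕ → ℝ)
    (Δ : (Fin (m + 1) → ℝ) → ℂ → ℂ)
    (hΔ : ∀ b s, Δ b s = s ^ n + (∑ k ∈ Finset.range n, (a k : ℂ) * s ^ k)
      + Complex.exp (-s * (τ : ℂ)) * ∑ k : Fin (m + 1), (b k : ℂ) * s ^ (k : ℕ))
    (bstar : Fin (m + 1) → ℝ)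
    (hbstar : ∀ j ≤ m, iteratedDeriv j (Δ bstar) (s₀ : ℂ) = 0) :
    ((∃ b : Fin (m + 1) → ℝ, ∀ j ≤ m + 1, iteratedDeriv j (Δ b) (s₀ : ℂ) = 0)
        ↔ iteratedDeriv (m + 1) (Δ bstar) (s₀ : ℂ) = 0)
      ∧ ∀ b : Fin (m + 1) → ℝ,
          (∀ j ≤ m + 1, iteratedDeriv j (Δ b) (s₀ : ℂ) = 0) → b = bstar :=
  admissibility_criterion_general n m τ s₀ a Δ hΔ bstar hbstar
end

section
/- Let n ≥ m ≥ 0 be integers, τ > 0, and s_0 ∈ ℝ. Then there exists a unique tuple (a_0,…,a_{n-1}, b_0,…,b_m) ∈ ℝ^{n+m+1} such that the function Δ(s) = s^n + Σ_{k=0}^{n-1} a_k s^k + e^{-sτ} Σ_{k=0}^{m} b_k s^k satisfies Δ^{(j)}(s_0) = 0 for all j = 0, 1, …, n + m, i.e., such that s_0 is a root of Δ of the maximal multiplicity n + m + 1. -/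
/-!
The map sending the coefficients `(a, b)` to the derivatives `Δ^{(j)}(s₀)`, `j ≤ n + m`, is
affine between spaces of the same dimension `n + m + 1`, so it suffices that its linear part is
injective: if `deg P < n`, `deg Q < m` and all derivatives of `P + e^{-sτ} Q` of order
`< n + m` vanish at `s₀`, then `P = Q = 0`. This goes by induction on `m`: the operator
`d/ds + τ` sends `P + e^{-sτ} Q` to `(P' + τ P) + e^{-sτ} Q'`, lowering both the degree bound on
`Q` and the number of vanishing derivatives by one; then `P' + τ P = 0` forces `P = 0`, and `Q`
is a constant vanishing at `s₀`.

This gives a unique complex solution. For real `τ` and `s₀` its complex conjugate is again a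
solution, so it is real.
-/

open Polynomial Complex ComplexConjugate

noncomputable section

namespace Polynomial

variable {R : Type*}

theorem degree_derivative_lt_of_degree_lt_succ [Semiring R] {p : R[X]} {n : ℕ}
    (hp : p.degree < ↑(n + 1)) : (derivative p).degree < n := by
  rw [degree_lt_iff_coeff_zero] at hp ⊢
  intro k hk
  rw [coeff_derivative, hp (k + 1) (by omega), zero_mul]

theorem eq_zero_of_derivative_add_C_mul_eq_zero [Semiring R] [NoZeroDivisors R] {c : R}
    (hc : c ≠ 0) {p : R[X]} (h : derivative p + C c * p = 0) : p = 0 := by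
  have hcoeff := congrArg (coeff · p.natDegree) h
  simp only [coeff_add, coeff_derivative, coeff_natDegree_succ_eq_zero, zero_mul, zero_add,
    coeff_C_mul, coeff_zero, mul_eq_zero, hc, false_or] at hcoeff
  exact leadingCoeff_eq_zero.1 hcoeff

theorem eq_zero_of_degree_lt_of_eval_iterate_derivative_eq_zero [CommRing R] [IsDomain R]
    [CharZero R] {n : ℕ} {p : R[X]} {x : R} (hp : p.degree < n)
    (h : ∀ j < n, (derivative^[j] p).eval x = 0) : p = 0 := by
  induction n generalizing p with
  | zero => simpa using hp
  | succ n ih =>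
    have hp' : derivative p = 0 :=
      ih (degree_derivative_lt_of_degree_lt_succ hp) fun j hj => h (j + 1) (by omega)
    rw [eq_C_of_derivative_eq_zero hp'] at h ⊢
    simpa using h 0 n.succ_pos

theorem eval_ofFn [CommSemiring R] [DecidableEq R] {n : ℕ} (v : Fin n → R) (x : R) :
    (ofFn n v).eval x = ∑ i, v i * x ^ (i : ℕ) := by
  simp [ofFn_eq_sum_monomial, eval_finsetSum]

theorem iteratedDeriv_eval_s3 {𝕜 : Type*} [NontriviallyNormedField 𝕜] (p : 𝕜[X]) (j : ℕ) :
    iteratedDeriv j (fun x => p.eval x) = fun x => (derivative^[j] p).eval x := by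
  induction j generalizing p with
  | zero => simp
  | succ j ih =>
    have hderiv : deriv (fun x => p.eval x) = fun x => (derivative p).eval x := by
      funext x
      exact p.deriv
    rw [iteratedDeriv_succ', hderiv, ih, Function.iterate_succ_apply]

end Polynomial

theorem iteratedDeriv_conj_conj {𝕜 : Type*} [NontriviallyNormedField 𝕜] [StarRing 𝕜]
    [NormedStarGroup 𝕜] (f : 𝕜 → 𝕜) (j : ℕ) :
    iteratedDeriv j (conj ∘ f ∘ conj) = conj ∘ iteratedDeriv j f ∘ conj := by
  induction j generalizing f with
  | zero => simp
  | succ j ih => rw [iteratedDeriv_succ', iteratedDeriv_succ', deriv_conj_conj, ih]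

def quasipoly (τ : ℂ) (P Q : ℂ[X]) (s : ℂ) : ℂ :=
  P.eval s + exp (-s * τ) * Q.eval s

section Quasipoly

variable (τ : ℂ) (P Q : ℂ[X])

theorem contDiff_quasipoly {k : WithTop ℕ∞} : ContDiff ℂ k (quasipoly τ P Q) :=
  (P.differentiable.add ((differentiable_exp.comp
    (differentiable_id.neg.mul_const τ)).mul Q.differentiable)).contDiff

theorem quasipoly_add (P' Q' : ℂ[X]) :
    quasipoly τ (P + P') (Q + Q') = quasipoly τ P Q + quasipoly τ P' Q' := by
  funext s
  simp only [quasipoly, eval_add, Pi.add_apply]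
  ring

theorem quasipoly_smul (c : ℂ) : quasipoly τ (c • P) (c • Q) = c • quasipoly τ P Q := by
  funext s
  simp only [quasipoly, eval_smul, Pi.smul_apply, smul_eq_mul]
  ring

theorem quasipoly_zero_right : quasipoly τ P 0 = fun s => P.eval s := by
  funext s
  simp [quasipoly]

theorem deriv_quasipoly :
    deriv (quasipoly τ P Q) = quasipoly τ (derivative P) (derivative Q - C τ * Q) := by
  funext s
  have hderiv : HasDerivAt (quasipoly τ P Q)
      ((derivative P).eval s + (exp (-s * τ) * (-1 * τ) * Q.eval s
        + exp (-s * τ) * (derivative Q).eval s)) s :=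
    (P.hasDerivAt s).add ((((hasDerivAt_neg s).mul_const τ).cexp).mul (Q.hasDerivAt s))
  rw [hderiv.deriv]
  simp only [quasipoly, eval_sub, eval_mul, eval_C]
  ring

theorem quasipoly_derivative_add_C_mul :
    quasipoly τ (derivative P + C τ * P) (derivative Q)
      = deriv (quasipoly τ P Q) + τ • quasipoly τ P Q := by
  rw [deriv_quasipoly]
  funext s
  simp only [quasipoly, eval_add, eval_sub, eval_mul, eval_C, Pi.add_apply, Pi.smul_apply,
    smul_eq_mul]
  ring

end Quasipoly

theorem eq_zero_of_iteratedDeriv_quasipoly_eq_zero {τ : ℂ} (hτ : τ ≠ 0) {s₀ : ℂ} {n m : ℕ}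
    {P Q : ℂ[X]} (hP : P.degree < n) (hQ : Q.degree < m)
    (h : ∀ j < n + m, iteratedDeriv j (quasipoly τ P Q) s₀ = 0) : P = 0 ∧ Q = 0 := by
  induction m generalizing P Q with
  | zero =>
    obtain rfl : Q = 0 := by simpa using hQ
    refine ⟨eq_zero_of_degree_lt_of_eval_iterate_derivative_eq_zero (x := s₀) hP
      fun j hj => ?_, rfl⟩
    simpa [quasipoly_zero_right, iteratedDeriv_eval_s3] using h j hj
  | succ m ih =>
    have hP' : (derivative P + C τ * P).degree < n :=
      (degree_add_le _ _).trans_lt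
        (max_lt (degree_derivative_le.trans_lt hP) ((degree_C_mul hτ).trans_lt hP))
    obtain ⟨hP0, hQ'⟩ := ih hP' (degree_derivative_lt_of_degree_lt_succ hQ) fun j hj => by
      rw [quasipoly_derivative_add_C_mul, iteratedDeriv_add, iteratedDeriv_const_smul_field,
        ← iteratedDeriv_succ', h (j + 1) (by omega), h j (by omega), smul_zero, add_zero]
      · rw [deriv_quasipoly]
        exact (contDiff_quasipoly ..).contDiffAt
      · exact ((contDiff_quasipoly ..).const_smul τ).contDiffAt
    obtain rfl := eq_zero_of_derivative_add_C_mul_eq_zero hτ hP0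
    refine ⟨rfl, ?_⟩
    have hQ0 := h 0 (by omega)
    rw [eq_C_of_derivative_eq_zero hQ'] at hQ0 ⊢
    simpa [quasipoly, exp_ne_zero] using hQ0

def quasipolyJet (τ s₀ : ℂ) (N : ℕ) : ℂ[X] × ℂ[X] →ₗ[ℂ] (Fin N → ℂ) where
  toFun PQ j := iteratedDeriv j (quasipoly τ PQ.1 PQ.2) s₀
  map_add' _ _ := by
    funext j
    simp only [Prod.fst_add, Prod.snd_add, quasipoly_add, Pi.add_apply]
    exact iteratedDeriv_add (contDiff_quasipoly ..).contDiffAt (contDiff_quasipoly ..).contDiffAt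
  map_smul' _ _ := by
    funext j
    simp only [Prod.smul_fst, Prod.smul_snd, quasipoly_smul, iteratedDeriv_const_smul_field,
      RingHom.id_apply, Pi.smul_apply]

@[simp]
theorem quasipolyJet_apply (τ s₀ : ℂ) (N : ℕ) (PQ : ℂ[X] × ℂ[X]) (j : Fin N) :
    quasipolyJet τ s₀ N PQ j = iteratedDeriv j (quasipoly τ PQ.1 PQ.2) s₀ :=
  rfl

theorem quasipolyJet_comp_ofFn_bijective {τ : ℂ} (hτ : τ ≠ 0) (s₀ : ℂ) (n m : ℕ) :
    Function.Bijective (quasipolyJet τ s₀ (n + m) ∘ₗ (ofFn n).prodMap (ofFn m)) := by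
  have hinj : Function.Injective (quasipolyJet τ s₀ (n + m) ∘ₗ (ofFn n).prodMap (ofFn m)) := by
    refine (injective_iff_map_eq_zero _).2 fun ab hab => ?_
    obtain ⟨ha, hb⟩ := eq_zero_of_iteratedDeriv_quasipoly_eq_zero hτ (s₀ := s₀)
      (ofFn_degree_lt ab.1) (ofFn_degree_lt ab.2) fun j hj => congrFun hab ⟨j, hj⟩
    exact Prod.ext ((map_eq_zero_iff _ (injective_ofFn n)).1 ha)
      ((map_eq_zero_iff _ (injective_ofFn m)).1 hb)
  refine ⟨hinj, (LinearMap.injective_iff_surjective_of_finrank_eq_finrank ?_).1 hinj⟩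
  simp

def charQuasipoly {n m : ℕ} (τ : ℂ) (ab : (Fin n → ℂ) × (Fin m → ℂ)) (s : ℂ) : ℂ :=
  s ^ n + (∑ k : Fin n, ab.1 k * s ^ (k : ℕ)) + exp (-s * τ) * ∑ k : Fin m, ab.2 k * s ^ (k : ℕ)

theorem charQuasipoly_eq_pow_add_quasipoly {n m : ℕ} (τ : ℂ) (ab : (Fin n → ℂ) × (Fin m → ℂ)) :
    charQuasipoly τ ab = (fun s => s ^ n) + quasipoly τ (ofFn n ab.1) (ofFn m ab.2) := by
  funext s
  simp only [charQuasipoly, quasipoly, eval_ofFn, Pi.add_apply]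
  ring

theorem charQuasipoly_conj_star {n m : ℕ} (τ : ℂ) (ab : (Fin n → ℂ) × (Fin m → ℂ)) :
    charQuasipoly (conj τ) (star ab) = conj ∘ charQuasipoly τ ab ∘ conj := by
  funext s
  simp [charQuasipoly, map_sum, ← exp_conj]

theorem existsUnique_charQuasipoly {τ : ℂ} (hτ : τ ≠ 0) (s₀ : ℂ) (n m : ℕ) :
    ∃! ab : (Fin n → ℂ) × (Fin m → ℂ),
      ∀ j < n + m, iteratedDeriv j (charQuasipoly τ ab) s₀ = 0 := by
  set L := quasipolyJet τ s₀ (n + m) ∘ₗ (ofFn n).prodMap (ofFn m)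
  have hcond : ∀ ab, (∀ j < n + m, iteratedDeriv j (charQuasipoly τ ab) s₀ = 0) ↔
      L ab = -fun j : Fin (n + m) => iteratedDeriv j (fun s : ℂ => s ^ n) s₀ := by
    intro ab
    simp only [charQuasipoly_eq_pow_add_quasipoly, funext_iff, Fin.forall_iff,
      eq_neg_iff_add_eq_zero, Pi.add_apply, Pi.zero_apply, L, LinearMap.comp_apply,
      LinearMap.prodMap_apply, quasipolyJet_apply]
    refine forall₂_congr fun j _ => ?_
    rw [iteratedDeriv_add (by fun_prop) (contDiff_quasipoly ..).contDiffAt, add_comm]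
  exact (existsUnique_congr hcond).2 ((quasipolyJet_comp_ofFn_bijective hτ s₀ n m).existsUnique _)

theorem existsUnique_real_of_existsUnique_star {ι κ : Type*} {p : (ι → ℂ) × (κ → ℂ) → Prop}
    (h : ∃! z, p z) (hstar : ∀ z, p z → p (star z)) :
    ∃! x : (ι → ℝ) × (κ → ℝ), p (fun k => (x.1 k : ℂ), fun k => (x.2 k : ℂ)) := by
  obtain ⟨z, hz, hz_unique⟩ := h
  have hz_real : ((fun k => ((z.1 k).re : ℂ)), fun k => ((z.2 k).re : ℂ)) = z := by
    have hz_star := hz_unique _ (hstar z hz)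
    ext k
    · exact conj_eq_iff_re.1 (congrFun (congrArg Prod.fst hz_star) k)
    · exact conj_eq_iff_re.1 (congrFun (congrArg Prod.snd hz_star) k)
  refine ⟨(fun k => (z.1 k).re, fun k => (z.2 k).re), hz_real ▸ hz, fun x hx => ?_⟩
  have hxz := (hz_unique _ hx).trans hz_real.symm
  ext k
  · exact ofReal_injective (congrFun (congrArg Prod.fst hxz) k)
  · exact ofReal_injective (congrFun (congrArg Prod.snd hxz) k)

theorem existsUnique_coeffs_maximal_multiplicity_general
    (n m : ℕ) (τ : ℝ) (hτ : 0 < τ) (s₀ : ℝ) :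
    ∃! ab : (Fin n → ℝ) × (Fin (m + 1) → ℝ), ∀ j ≤ n + m,
      iteratedDeriv j
        (fun s : ℂ => s ^ n + (∑ k : Fin n, (ab.1 k : ℂ) * s ^ (k : ℕ))
          + Complex.exp (-s * (τ : ℂ)) * ∑ k : Fin (m + 1), (ab.2 k : ℂ) * s ^ (k : ℕ))
        (s₀ : ℂ) = 0 := by
  have hτ' : (τ : ℂ) ≠ 0 := ofReal_ne_zero.2 hτ.ne'
  have hunique := existsUnique_charQuasipoly hτ' s₀ n (m + 1)
  simp only [← add_assoc, Nat.lt_add_one_iff] at hunique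
  refine existsUnique_real_of_existsUnique_star hunique fun ab hab j hj => ?_
  rw [← conj_ofReal τ, charQuasipoly_conj_star, iteratedDeriv_conj_conj]
  simp [hab j hj]

/-- Given `n ≥ m ≥ 0`, a delay `τ > 0`, and a real point `s₀`, there exists a
unique tuple `(a_0, …, a_{n-1}, b_0, …, b_m)` of real coefficients such that
`Δ(s) = s^n + ∑_{k=0}^{n-1} a_k s^k + e^{-sτ} ∑_{k=0}^{m} b_k s^k`
satisfies `Δ^{(j)}(s₀) = 0` for all `j = 0, 1, …, n + m`, i.e. such that `s₀`
is a root of `Δ` of the maximal multiplicity `n + m + 1`. -/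
theorem existsUnique_coeffs_maximal_multiplicity
    (n m : ℕ) (hnm : m ≤ n) (τ : ℝ) (hτ : 0 < τ) (s₀ : ℝ) :
    ∃! ab : (Fin n → ℝ) × (Fin (m + 1) → ℝ), ∀ j ≤ n + m,
      iteratedDeriv j
        (fun s : ℂ => s ^ n + (∑ k : Fin n, (ab.1 k : ℂ) * s ^ (k : ℕ))
          + Complex.exp (-s * (τ : ℂ)) * ∑ k : Fin (m + 1), (ab.2 k : ℂ) * s ^ (k : ℕ))
        (s₀ : ℂ) = 0 :=
  existsUnique_coeffs_maximal_multiplicity_general n m τ hτ s₀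
end
end

section
/- Let τ > 0 and s_0 ∈ ℝ. There exist real numbers α and β such that s_0 is a root of multiplicity at least 3 of Δ(s) = s² + 1 + (β + α s) e^{-sτ} (i.e., Δ(s_0) = Δ'(s_0) = Δ''(s_0) = 0) if and only if τ²(s_0² + 1) + 4τ s_0 + 2 = 0. -/
/-!
Writing `Δ(s) = s² + 1 + (β + αs)e^{-sτ}`, one has
`(d/ds + τ)² Δ = e^{-sτ} (d/ds)² (e^{sτ} Δ) = τ²(s² + 1) + 4τs + 2`,
since `e^{sτ} Δ(s) = e^{sτ}(s² + 1) + β + αs` and the gains enter only through an affine term.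
So a triple root forces the condition, and conversely, once `α`, `β` are chosen to solve the
two linear equations `Δ(s₀) = Δ'(s₀) = 0`, the condition gives `Δ''(s₀) = 0`.
-/

open Complex

theorem hasDerivAt_add_mul_exp_neg_mul {p q : ℂ → ℂ} {p' q' s : ℂ} (τ : ℂ)
    (hp : HasDerivAt p p' s) (hq : HasDerivAt q q' s) :
    HasDerivAt (fun z => p z + q z * exp (-z * τ)) (p' + (q' - τ * q s) * exp (-s * τ)) s := by
  have he : HasDerivAt (fun z => exp (-z * τ)) (exp (-s * τ) * -τ) s :=
    ((hasDerivAt_id s).neg.mul_const τ).cexp.congr_deriv (by simp)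
  exact (hp.add (hq.mul he)).congr_deriv (by ring)

noncomputable def oscillatorChar (α β τ : ℂ) (s : ℂ) : ℂ :=
  s ^ 2 + 1 + (β + α * s) * exp (-s * τ)

section

variable (α β τ : ℂ)

theorem deriv_oscillatorChar :
    deriv (oscillatorChar α β τ) = fun s => 2 * s + (α - τ * (β + α * s)) * exp (-s * τ) := by
  funext s
  have hp : HasDerivAt (fun z : ℂ => z ^ 2 + 1) (2 * s) s := by
    simpa using (hasDerivAt_pow 2 s).add_const 1
  have hq : HasDerivAt (fun z => β + α * z) α s := by
    simpa using ((hasDerivAt_id s).const_mul α).const_add β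
  exact (hasDerivAt_add_mul_exp_neg_mul τ hp hq).deriv

theorem iteratedDeriv_two_oscillatorChar (s : ℂ) :
    iteratedDeriv 2 (oscillatorChar α β τ) s
      = 2 + (τ ^ 2 * (β + α * s) - 2 * τ * α) * exp (-s * τ) := by
  rw [iteratedDeriv_succ, iteratedDeriv_one, deriv_oscillatorChar]
  have hp : HasDerivAt (fun z => 2 * z) 2 s := by
    simpa using (hasDerivAt_id s).const_mul (2 : ℂ)
  have hq : HasDerivAt (fun z => α - τ * (β + α * z)) (-(τ * α)) s := by
    simpa using ((((hasDerivAt_id s).const_mul α).const_add β).const_mul τ).const_sub α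
  exact (hasDerivAt_add_mul_exp_neg_mul τ hp hq).deriv.trans (by ring)

theorem oscillatorChar_delay_combination (s : ℂ) :
    τ ^ 2 * oscillatorChar α β τ s + 2 * τ * deriv (oscillatorChar α β τ) s
        + iteratedDeriv 2 (oscillatorChar α β τ) s
      = τ ^ 2 * (s ^ 2 + 1) + 4 * τ * s + 2 := by
  rw [iteratedDeriv_two_oscillatorChar, deriv_oscillatorChar, oscillatorChar]
  ring

end

theorem iteratedDeriv_two_oscillatorChar_of_double_root {α β τ s : ℂ}
    (h0 : oscillatorChar α β τ s = 0) (h1 : deriv (oscillatorChar α β τ) s = 0) :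
    iteratedDeriv 2 (oscillatorChar α β τ) s = τ ^ 2 * (s ^ 2 + 1) + 4 * τ * s + 2 := by
  rw [← oscillatorChar_delay_combination, h0, h1]
  ring

theorem exists_oscillatorChar_double_root (τ s₀ : ℝ) :
    ∃ α β : ℝ, oscillatorChar α β τ s₀ = 0 ∧ deriv (oscillatorChar α β τ) s₀ = 0 := by
  set P := s₀ ^ 2 + 1
  set e := Real.exp (s₀ * τ)
  have he : exp (-(s₀ : ℂ) * τ) * e = 1 := by
    rw [ofReal_exp]; push_cast; rw [neg_mul, exp_neg, inv_mul_cancel₀ (exp_ne_zero _)]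
  -- the unique solution of the linear system `Δ(s₀) = Δ'(s₀) = 0` in `(α, β)`
  refine ⟨-(2 * s₀ + τ * P) * e, (s₀ * (2 * s₀ + τ * P) - P) * e, ?_, ?_⟩
  · simp only [oscillatorChar, P]; push_cast
    linear_combination -((s₀ : ℂ) ^ 2 + 1) * he
  · rw [deriv_oscillatorChar]; simp only [P]; push_cast
    linear_combination -2 * (s₀ : ℂ) * he

theorem oscillator_admissibility_condition_general (τ : ℝ) (s₀ : ℝ) :
    (∃ α β : ℝ, ∀ j ≤ 2, iteratedDeriv j
        (fun s : ℂ => s ^ 2 + 1 + ((β : ℂ) + (α : ℂ) * s) * Complex.exp (-s * (τ : ℂ)))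
        (s₀ : ℂ) = 0)
      ↔ τ ^ 2 * (s₀ ^ 2 + 1) + 4 * τ * s₀ + 2 = 0 := by
  constructor
  · rintro ⟨α, β, h⟩
    have h0 : oscillatorChar α β τ s₀ = 0 := h 0 (by norm_num)
    have h1 : deriv (oscillatorChar α β τ) s₀ = 0 := by
      rw [← iteratedDeriv_one]; exact h 1 (by norm_num)
    have h2 : iteratedDeriv 2 (oscillatorChar α β τ) s₀ = 0 := h 2 le_rfl
    rw [iteratedDeriv_two_oscillatorChar_of_double_root h0 h1] at h2
    exact_mod_cast h2
  · intro hcond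
    obtain ⟨α, β, h0, h1⟩ := exists_oscillatorChar_double_root τ s₀
    have h2 : iteratedDeriv 2 (oscillatorChar α β τ) s₀ = 0 := by
      rw [iteratedDeriv_two_oscillatorChar_of_double_root h0 h1]; exact_mod_cast hcond
    refine ⟨α, β, fun j hj => ?_⟩
    interval_cases j
    exacts [h0, by rwa [iteratedDeriv_one], h2]

/-- For the delayed-feedback harmonic oscillator with characteristic function
`Δ(s) = s² + 1 + (β + αs) e^{-sτ}`, given `τ > 0` and `s₀ ∈ ℝ`, there exist
real `α`, `β` making `s₀` a root of `Δ` of multiplicity at least `3`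
(`Δ(s₀) = Δ'(s₀) = Δ''(s₀) = 0`) if and only if
`τ²(s₀² + 1) + 4τs₀ + 2 = 0`. -/
theorem oscillator_admissibility_condition (τ : ℝ) (hτ : 0 < τ) (s₀ : ℝ) :
    (∃ α β : ℝ, ∀ j ≤ 2, iteratedDeriv j
        (fun s : ℂ => s ^ 2 + 1 + ((β : ℂ) + (α : ℂ) * s) * Complex.exp (-s * (τ : ℂ)))
        (s₀ : ℂ) = 0)
      ↔ τ ^ 2 * (s₀ ^ 2 + 1) + 4 * τ * s₀ + 2 = 0 :=
  oscillator_admissibility_condition_general τ s₀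
end

section
/- Let τ > 0. There exist s_0 ∈ ℝ and real numbers α, β such that s_0 is a root of multiplicity at least 3 of Δ(s) = s² + 1 + (β + α s) e^{-sτ} if and only if τ ≤ √2. (In particular, the method applies exactly for delays in the interval (0, √2], consistent with the paper's observation that stabilization is possible for delays at most approximately 1.4.) -/
/-!
The quasi-polynomial part `(β + α s) e^{-sτ}` of `Δ` is annihilated by
`(d/ds + τ)²`, so `Δ'' + 2τΔ' + τ²Δ = 2 + 4τs + τ²(s² + 1)` whatever `α` and `β` are.
A triple root `s₀` is therefore a real zero of this quadratic, i.e. `(τ s₀ + 2)² = 2 - τ²`,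
which forces `τ ≤ √2`. Conversely, for such an `s₀` the two linear conditions `Δ(s₀) = Δ'(s₀) = 0`
can be solved for `α, β` because `e^{-s₀τ} ≠ 0`, and `Δ''(s₀) = 0` then comes for free.
-/

open Complex

noncomputable section

def oscCharFun (τ α β s : ℂ) : ℂ := s ^ 2 + 1 + (β + α * s) * exp (-s * τ)

variable (τ α β : ℂ)

theorem hasDerivAt_oscCharFun (s : ℂ) :
    HasDerivAt (oscCharFun τ α β) (2 * s + (α - τ * (β + α * s)) * exp (-s * τ)) s := by
  have hexp : HasDerivAt (fun s : ℂ => exp (-s * τ)) (exp (-s * τ) * (-1 * τ)) s :=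
    (((hasDerivAt_id s).neg).mul_const τ).cexp
  have hlin : HasDerivAt (fun s : ℂ => β + α * s) α s := by
    simpa using ((hasDerivAt_id s).const_mul α).const_add β
  have hquad : HasDerivAt (fun s : ℂ => s ^ 2 + 1) (2 * s) s := by
    simpa using (hasDerivAt_pow 2 s).add_const 1
  exact (hquad.add (hlin.mul hexp)).congr_deriv (by ring)

theorem deriv_oscCharFun :
    deriv (oscCharFun τ α β) = fun s => 2 * s + (α - τ * (β + α * s)) * exp (-s * τ) :=
  funext fun s => (hasDerivAt_oscCharFun τ α β s).deriv

theorem hasDerivAt_deriv_oscCharFun (s : ℂ) :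
    HasDerivAt (deriv (oscCharFun τ α β))
      (2 + (τ ^ 2 * (β + α * s) - 2 * α * τ) * exp (-s * τ)) s := by
  have hexp : HasDerivAt (fun s : ℂ => exp (-s * τ)) (exp (-s * τ) * (-1 * τ)) s :=
    (((hasDerivAt_id s).neg).mul_const τ).cexp
  have hlin : HasDerivAt (fun s : ℂ => α - τ * (β + α * s)) (-(τ * α)) s := by
    simpa using ((((hasDerivAt_id s).const_mul α).const_add β).const_mul τ).const_sub α
  have htwo : HasDerivAt (fun s : ℂ => 2 * s) 2 s := by
    simpa using (hasDerivAt_id s).const_mul (2 : ℂ)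
  rw [deriv_oscCharFun]
  exact (htwo.add (hlin.mul hexp)).congr_deriv (by ring)

theorem iteratedDeriv_two_add_oscCharFun (s : ℂ) :
    iteratedDeriv 2 (oscCharFun τ α β) s + 2 * τ * iteratedDeriv 1 (oscCharFun τ α β) s
        + τ ^ 2 * iteratedDeriv 0 (oscCharFun τ α β) s
      = 2 + 4 * τ * s + τ ^ 2 * (s ^ 2 + 1) := by
  rw [iteratedDeriv_succ, iteratedDeriv_one, iteratedDeriv_zero,
    (hasDerivAt_deriv_oscCharFun τ α β s).deriv, deriv_oscCharFun, oscCharFun]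
  ring

theorem quadratic_eq_zero_of_iteratedDeriv_oscCharFun_eq_zero (s : ℂ)
    (h : ∀ j ≤ 2, iteratedDeriv j (oscCharFun τ α β) s = 0) :
    2 + 4 * τ * s + τ ^ 2 * (s ^ 2 + 1) = 0 := by
  rw [← iteratedDeriv_two_add_oscCharFun, h 0 (by norm_num), h 1 (by norm_num),
    h 2 (by norm_num)]
  ring

end

theorem exists_real_iteratedDeriv_oscCharFun_eq_zero {τ s : ℝ}
    (hs : 2 + 4 * τ * s + τ ^ 2 * (s ^ 2 + 1) = 0) :
    ∃ α β : ℝ, ∀ j ≤ 2, iteratedDeriv j (oscCharFun τ α β) s = 0 := by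
  set E := Real.exp (-(s * τ))
  have hE : E ≠ 0 := (Real.exp_pos _).ne'
  have hexp : exp (-(s : ℂ) * τ) = E := by
    rw [show -(s : ℂ) * τ = ((-(s * τ) : ℝ) : ℂ) by push_cast; ring, ofReal_exp]
  set α := -(2 * s + τ * (s ^ 2 + 1)) / E
  set β := -(s ^ 2 + 1) / E - α * s
  have hΔ : s ^ 2 + 1 + (β + α * s) * E = 0 := by
    simp only [β]; field_simp; ring
  have hΔ' : 2 * s + (α - τ * (β + α * s)) * E = 0 := by
    simp only [β, α]; field_simp; ring
  have h0 : iteratedDeriv 0 (oscCharFun τ α β) s = 0 := by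
    rw [iteratedDeriv_zero, oscCharFun, hexp]; exact_mod_cast hΔ
  have h1 : iteratedDeriv 1 (oscCharFun τ α β) s = 0 := by
    simp only [iteratedDeriv_one, deriv_oscCharFun, hexp]; exact_mod_cast hΔ'
  have h2 : iteratedDeriv 2 (oscCharFun τ α β) s = 0 := by
    have h := iteratedDeriv_two_add_oscCharFun τ α β s
    rw [h0, h1] at h
    simpa using h.trans (by exact_mod_cast hs)
  refine ⟨α, β, fun j hj => ?_⟩
  interval_cases j <;> assumption

theorem exists_quadratic_eq_zero_iff_le_sqrt_two {τ : ℝ} (hτ : 0 < τ) :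
    (∃ s : ℝ, 2 + 4 * τ * s + τ ^ 2 * (s ^ 2 + 1) = 0) ↔ τ ≤ √2 := by
  have hsq (s : ℝ) : 2 + 4 * τ * s + τ ^ 2 * (s ^ 2 + 1) = (τ * s + 2) ^ 2 - (2 - τ ^ 2) := by
    ring
  rw [Real.le_sqrt' hτ]
  constructor
  · rintro ⟨s, hs⟩
    nlinarith [hsq s, sq_nonneg (τ * s + 2)]
  · intro hτ2
    refine ⟨(√(2 - τ ^ 2) - 2) / τ, ?_⟩
    rw [hsq, mul_div_cancel₀ _ hτ.ne', sub_add_cancel, Real.sq_sqrt (by linarith), sub_self]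

/-- For the delayed-feedback harmonic oscillator with characteristic function
`Δ(s) = s² + 1 + (β + αs) e^{-sτ}` and a given delay `τ > 0`, there exist a
real point `s₀` and real coefficients `α`, `β` making `s₀` a root of `Δ` of
multiplicity at least `3` if and only if `τ ≤ √2`. -/
theorem oscillator_admissible_delay_iff (τ : ℝ) (hτ : 0 < τ) :
    (∃ (s₀ α β : ℝ), ∀ j ≤ 2, iteratedDeriv j
        (fun s : ℂ => s ^ 2 + 1 + ((β : ℂ) + (α : ℂ) * s) * Complex.exp (-s * (τ : ℂ)))
        (s₀ : ℂ) = 0)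
      ↔ τ ≤ Real.sqrt 2 := by
  rw [← exists_quadratic_eq_zero_iff_le_sqrt_two hτ]
  constructor
  · rintro ⟨s₀, α, β, h⟩
    refine ⟨s₀, ?_⟩
    exact_mod_cast quadratic_eq_zero_of_iteratedDeriv_oscCharFun_eq_zero τ α β s₀ h
  · rintro ⟨s₀, hs₀⟩
    obtain ⟨α, β, h⟩ := exists_real_iteratedDeriv_oscCharFun_eq_zero hs₀
    exact ⟨s₀, α, β, h⟩
end

section
/- Let s_0 ∈ ℝ and suppose there exist α, β ∈ ℝ such that s_0 is a root of multiplicity at least 3 of Δ(s) = s² + 1 + (β + α s) e^{-s} (delay τ = 1). Then s_0 = −1 or s_0 = −3. Conversely, for each of s_0 = −1 and s_0 = −3 there exist α, β ∈ ℝ making s_0 such a root of multiplicity at least 3. -/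
/-!
The perturbation `(β + α s) e^{-s}` lies in the span of `e^{-s}` and `s e^{-s}`, which is the kernel
of `(1 + d/ds)²`. Hence `Δ + 2Δ' + Δ''` only sees the polynomial part and equals
`(s² + 1) + 4s + 2 = (s + 1)(s + 3)`, so a triple root must be `-1` or `-3`. Conversely, writing
`α = a e^{s₀}`, `β = b e^{s₀}` turns the three root conditions into a linear system in `a, b`,
which is solvable exactly when `(s₀ + 1)(s₀ + 3) = 0`.
-/

open Complex

noncomputable def delayCharFn (α β : ℝ) (s : ℂ) : ℂ :=
  s ^ 2 + 1 + ((β : ℂ) + (α : ℂ) * s) * exp (-s)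

theorem hasDerivAt_affine_mul_exp_neg (a b s : ℂ) :
    HasDerivAt (fun s => (b + a * s) * exp (-s)) ((a - b + -a * s) * exp (-s)) s := by
  have hexp : HasDerivAt (fun s => exp (-s)) (-exp (-s)) s := by
    simpa using (hasDerivAt_neg s).cexp
  have hlin : HasDerivAt (fun s => b + a * s) a s := by
    simpa using ((hasDerivAt_id s).const_mul a).const_add b
  exact (hlin.mul hexp).congr_deriv (by ring)

section delayCharFn

variable (α β : ℝ)

theorem deriv_delayCharFn :
    deriv (delayCharFn α β) = fun s => 2 * s + ((α - β : ℂ) + -α * s) * exp (-s) :=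
  funext fun s => (((hasDerivAt_pow 2 s).add_const 1).add
    (hasDerivAt_affine_mul_exp_neg (α : ℂ) β s)).deriv.trans (by ring)

theorem iteratedDeriv_two_delayCharFn :
    iteratedDeriv 2 (delayCharFn α β) = fun s => 2 + ((β - 2 * α : ℂ) + α * s) * exp (-s) := by
  rw [iteratedDeriv_succ, iteratedDeriv_one, deriv_delayCharFn]
  funext s
  refine ((((hasDerivAt_id s).const_mul 2).add
    (hasDerivAt_affine_mul_exp_neg (-α : ℂ) (α - β) s)).deriv).trans ?_
  ring

theorem delayCharFn_add_two_mul_deriv_add_iteratedDeriv_two (s : ℂ) :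
    delayCharFn α β s + 2 * deriv (delayCharFn α β) s + iteratedDeriv 2 (delayCharFn α β) s
      = (s + 1) * (s + 3) := by
  rw [deriv_delayCharFn, iteratedDeriv_two_delayCharFn, delayCharFn]
  ring

end delayCharFn

theorem eq_neg_one_or_eq_neg_three_of_triple_root {α β s₀ : ℝ}
    (h : ∀ j ≤ 2, iteratedDeriv j (delayCharFn α β) s₀ = 0) : s₀ = -1 ∨ s₀ = -3 := by
  have h₀ := h 0 (by norm_num)
  have h₁ := h 1 (by norm_num)
  have h₂ := h 2 (by norm_num)
  rw [iteratedDeriv_zero] at h₀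
  rw [iteratedDeriv_one] at h₁
  have hC : ((s₀ + 1) * (s₀ + 3) : ℂ) = 0 := by
    rw [← delayCharFn_add_two_mul_deriv_add_iteratedDeriv_two, h₀, h₁, h₂]
    ring
  have hR : (s₀ + 1) * (s₀ + 3) = 0 := by exact_mod_cast hC
  rcases mul_eq_zero.1 hR with h | h
  · exact .inl (eq_neg_of_add_eq_zero_left h)
  · exact .inr (eq_neg_of_add_eq_zero_left h)

/-- The gains are `α = a e^{s₀}`, `β = b e^{s₀}` with `a = (1 - s₀²)/2`, `b = -(s₀² + 1 + a s₀)`,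
the solution of the equations for `Δ(s₀)` and `Δ''(s₀)`. -/
theorem exists_triple_root_of_mul_eq_zero {s₀ : ℝ} (hs₀ : (s₀ + 1) * (s₀ + 3) = 0) :
    ∃ α β : ℝ, ∀ j ≤ 2, iteratedDeriv j (delayCharFn α β) s₀ = 0 := by
  set a : ℝ := (1 - s₀ ^ 2) / 2
  refine ⟨a * Real.exp s₀, -(s₀ ^ 2 + 1 + a * s₀) * Real.exp s₀, fun j hj => ?_⟩
  have hexp : exp (s₀ : ℂ) * exp (-s₀) = 1 := by rw [← exp_add, add_neg_cancel, exp_zero]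
  have hs₀C : ((s₀ + 1) * (s₀ + 3) : ℂ) = 0 := by exact_mod_cast hs₀
  interval_cases j
  · rw [iteratedDeriv_zero, delayCharFn]
    push_cast [a]
    linear_combination (-(s₀ : ℂ) ^ 2 - 1) * hexp
  · rw [iteratedDeriv_one, deriv_delayCharFn]
    push_cast [a]
    linear_combination (-(s₀ : ℂ) * 2) * hexp + (1 / 2 * exp (s₀ : ℂ) * exp (-s₀)) * hs₀C
  · rw [iteratedDeriv_two_delayCharFn]
    push_cast [a]
    linear_combination (-2 : ℂ) * hexp

/-- For the delayed-feedback harmonic oscillator with delay `τ = 1` and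
characteristic function `Δ(s) = s² + 1 + (β + αs) e^{-s}`, a real point `s₀`
can be assigned as a root of multiplicity at least `3` (for some choice of
real `α`, `β`) if and only if `s₀ = -1` or `s₀ = -3`. -/
theorem oscillator_delay_one_triple_roots (s₀ : ℝ) :
    (∃ α β : ℝ, ∀ j ≤ 2, iteratedDeriv j
        (fun s : ℂ => s ^ 2 + 1 + ((β : ℂ) + (α : ℂ) * s) * Complex.exp (-s))
        (s₀ : ℂ) = 0)
      ↔ s₀ = -1 ∨ s₀ = -3 := by
  refine ⟨fun ⟨α, β, h⟩ => eq_neg_one_or_eq_neg_three_of_triple_root h, fun h => ?_⟩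
  refine exists_triple_root_of_mul_eq_zero ?_
  rcases h with rfl | rfl <;> norm_num
end

section
/- Let τ > 0, s_0 ∈ ℝ, and α, β ∈ ℝ, and suppose s_0 is a root of multiplicity at least 3 of Δ(s) = s² + 1 + (β + α s) e^{-sτ} (i.e., Δ(s_0) = Δ'(s_0) = Δ''(s_0) = 0). Then s_0 ≤ −1. -/
/-!
Write `D = d/ds`. Since `(D + τ) e^{-sτ} = 0`, the operator `(D + τ)²` annihilates
`(β + α s) e^{-sτ}`, so `Δ'' + 2τΔ' + τ²Δ = (D + τ)² (s² + 1) = τ²(s² + 1) + 4τs + 2`.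
At a triple root this quadratic in `τ` vanishes: a positive root `τ` forces `s₀ < 0`,
and a real one forces the discriminant `8(s₀² - 1)` to be nonnegative.
-/

open Complex

noncomputable def delayedPDCharFun (τ α β : ℂ) (s : ℂ) : ℂ :=
  s ^ 2 + 1 + (β + α * s) * exp (-s * τ)

section

variable (τ α β : ℂ)

lemma hasDerivAt_exp_neg_mul (s : ℂ) :
    HasDerivAt (fun s : ℂ => exp (-s * τ)) (-τ * exp (-s * τ)) s := by
  have := ((hasDerivAt_id s).neg.mul_const τ).cexp
  simpa [mul_comm] using this

lemma hasDerivAt_delayedPDCharFun (s : ℂ) :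
    HasDerivAt (delayedPDCharFun τ α β)
      (2 * s + (α - τ * (β + α * s)) * exp (-s * τ)) s := by
  have hpoly : HasDerivAt (fun s : ℂ => s ^ 2 + 1) (2 * s) s := by
    simpa using (hasDerivAt_pow 2 s).add_const 1
  have hlin : HasDerivAt (fun s : ℂ => β + α * s) α s := by
    simpa using ((hasDerivAt_id s).const_mul α).const_add β
  exact (hpoly.add (hlin.mul (hasDerivAt_exp_neg_mul τ s))).congr_deriv (by ring)

lemma deriv_delayedPDCharFun :
    deriv (delayedPDCharFun τ α β) =
      fun s => 2 * s + (α - τ * (β + α * s)) * exp (-s * τ) :=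
  funext fun s => (hasDerivAt_delayedPDCharFun τ α β s).deriv

lemma iteratedDeriv_two_delayedPDCharFun (s : ℂ) :
    iteratedDeriv 2 (delayedPDCharFun τ α β) s =
      2 + (τ ^ 2 * (β + α * s) - 2 * τ * α) * exp (-s * τ) := by
  rw [iteratedDeriv_succ, iteratedDeriv_one, deriv_delayedPDCharFun]
  have hlin : HasDerivAt (fun s : ℂ => α - τ * (β + α * s)) (-(τ * α)) s := by
    simpa using (((hasDerivAt_id s).const_mul α).const_add β).const_mul τ |>.const_sub α
  have hdouble : HasDerivAt (fun s : ℂ => 2 * s) 2 s := by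
    simpa using (hasDerivAt_id s).const_mul (2 : ℂ)
  exact (hdouble.add (hlin.mul (hasDerivAt_exp_neg_mul τ s))).deriv.trans (by ring)

lemma delayedPDCharFun_annihilator (s : ℂ) :
    iteratedDeriv 2 (delayedPDCharFun τ α β) s
        + 2 * τ * iteratedDeriv 1 (delayedPDCharFun τ α β) s
        + τ ^ 2 * iteratedDeriv 0 (delayedPDCharFun τ α β) s =
      τ ^ 2 * (s ^ 2 + 1) + 4 * τ * s + 2 := by
  rw [iteratedDeriv_two_delayedPDCharFun, iteratedDeriv_one, deriv_delayedPDCharFun,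
    iteratedDeriv_zero, delayedPDCharFun]
  ring

end

lemma le_neg_one_of_sq_mul_add_mul_add_two_eq_zero {τ s : ℝ} (hτ : 0 < τ)
    (h : τ ^ 2 * (s ^ 2 + 1) + 4 * τ * s + 2 = 0) : s ≤ -1 := by
  have hs_neg : s < 0 := by nlinarith [sq_nonneg (τ * s)]
  have hdisc : (τ * (s ^ 2 + 1) + 2 * s) ^ 2 = 2 * (s ^ 2 - 1) := by
    linear_combination (s ^ 2 + 1) * h
  have hs_sq : 1 ≤ s ^ 2 := by nlinarith [sq_nonneg (τ * (s ^ 2 + 1) + 2 * s)]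
  nlinarith

/-- If `τ > 0`, `s₀ ∈ ℝ`, and `α, β ∈ ℝ` are such that `s₀` is a root of
multiplicity at least `3` of `Δ(s) = s² + 1 + (β + αs) e^{-sτ}`
(i.e. `Δ(s₀) = Δ'(s₀) = Δ''(s₀) = 0`), then `s₀ ≤ -1`. -/
theorem oscillator_triple_root_le_neg_one
    (τ : ℝ) (hτ : 0 < τ) (s₀ α β : ℝ)
    (h : ∀ j ≤ 2, iteratedDeriv j
      (fun s : ℂ => s ^ 2 + 1 + ((β : ℂ) + (α : ℂ) * s) * Complex.exp (-s * (τ : ℂ)))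
      (s₀ : ℂ) = 0) :
    s₀ ≤ -1 := by
  have hroot (j : ℕ) (hj : j ≤ 2) : iteratedDeriv j (delayedPDCharFun τ α β) s₀ = 0 := h j hj
  have hquad : ((τ ^ 2 * (s₀ ^ 2 + 1) + 4 * τ * s₀ + 2 : ℝ) : ℂ) = 0 := by
    push_cast
    rw [← delayedPDCharFun_annihilator, hroot 0 (by norm_num), hroot 1 (by norm_num),
      hroot 2 le_rfl]
    ring
  exact le_neg_one_of_sq_mul_add_mul_add_two_eq_zero hτ (by exact_mod_cast hquad)
end

section
/- Every root s ∈ ℂ of the quasipolynomial Δ(s) = s² + 1 − (2/e) e^{-s} satisfies Re s ≤ −1. Consequently the spectral abscissa γ = sup{Re s : Δ(s) = 0} equals −1, and in particular γ < 0. -/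
/-!
Substituting `s = z - 1` turns `Δ(s)` into `z² - 2z + 2 - 2e^{-z}`, and Taylor's formula with
integral remainder for `e^{-z}` factors this as `z² (1 - 2K(z))` with
`K(z) = ∫₀¹ (1 - t) e^{-zt} dt`. For `Re z > 0` the integrand is strictly dominated by `1 - t`,
so `‖K(z)‖ < 1/2` and `Δ` has no root with `Re s > -1`, while `s = -1` (`z = 0`) is a root.
-/

open Complex intervalIntegral

noncomputable section

def expRemainderKernel (z : ℂ) : ℂ :=
  ∫ t in (0 : ℝ)..1, (1 - (t : ℂ)) * exp (-(z * t))

theorem sq_mul_expRemainderKernel (z : ℂ) :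
    z ^ 2 * expRemainderKernel z = exp (-z) - 1 + z := by
  have hderiv : ∀ t : ℝ, HasDerivAt (fun t : ℝ => (1 - z * (1 - (t : ℂ))) * exp (-(z * t)))
      (z ^ 2 * ((1 - (t : ℂ)) * exp (-(z * t)))) t := by
    intro t
    have hid : HasDerivAt (fun t : ℝ => (t : ℂ)) 1 t := ofRealCLM.hasDerivAt
    have hlin : HasDerivAt (fun t : ℝ => 1 - z * (1 - (t : ℂ))) z t := by
      simpa using ((hid.const_sub 1).const_mul z).const_sub 1
    have hexp : HasDerivAt (fun t : ℝ => exp (-(z * t))) (exp (-(z * t)) * -z) t := by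
      simpa using (hid.const_mul z).fun_neg.cexp
    exact (hlin.mul hexp).congr_deriv (by ring)
  rw [expRemainderKernel, ← integral_const_mul,
    integral_eq_sub_of_hasDerivAt (fun t _ => hderiv t)
    (Continuous.intervalIntegrable (by fun_prop) _ _)]
  simp only [ofReal_one, ofReal_zero, sub_self, mul_zero, sub_zero, mul_one, neg_zero, exp_zero]
  ring

theorem norm_expRemainderKernel_le (z : ℂ) :
    ‖expRemainderKernel z‖ ≤ ∫ t in (0 : ℝ)..1, (1 - t) * Real.exp (-(z.re * t)) := by
  refine norm_integral_le_of_norm_le zero_le_one (.of_forall fun t ht => ?_)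
    (Continuous.intervalIntegrable (by fun_prop) _ _)
  have hnorm : ‖(1 : ℂ) - t‖ = 1 - t := by
    rw [← ofReal_one, ← ofReal_sub, norm_real, Real.norm_of_nonneg (by linarith [ht.2])]
  simp [norm_exp, hnorm]

theorem integral_one_sub_mul_exp_lt_half {a : ℝ} (ha : 0 < a) :
    ∫ t in (0 : ℝ)..1, (1 - t) * Real.exp (-(a * t)) < 1 / 2 := by
  have hhalf : ∫ t in (0 : ℝ)..1, (1 - t) = 1 / 2 := by
    rw [integral_sub intervalIntegrable_const intervalIntegral.intervalIntegrable_id, integral_id]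
    norm_num
  rw [← hhalf]
  refine integral_lt_integral_of_continuousOn_of_le_of_exists_lt one_pos (by fun_prop)
    (by fun_prop) (fun t ht => ?_) ⟨1 / 2, by norm_num, ?_⟩
  · have : Real.exp (-(a * t)) ≤ 1 := Real.exp_le_one_iff.2 (by nlinarith [ht.1])
    nlinarith [ht.2]
  · have : Real.exp (-(a * (1 / 2))) < 1 := Real.exp_lt_one_iff.2 (by linarith)
    linarith

theorem norm_expRemainderKernel_lt_half {z : ℂ} (hz : 0 < z.re) :
    ‖expRemainderKernel z‖ < 1 / 2 :=
  (norm_expRemainderKernel_le z).trans_lt (integral_one_sub_mul_exp_lt_half hz)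

def oscillatorCharFun (s : ℂ) : ℂ :=
  s ^ 2 + 1 - ((2 / Real.exp 1 : ℝ) : ℂ) * exp (-s)

theorem oscillatorCharFun_sub_one (z : ℂ) :
    oscillatorCharFun (z - 1) = z ^ 2 * (1 - 2 * expRemainderKernel z) := by
  have hexp : ((2 / Real.exp 1 : ℝ) : ℂ) * exp (-(z - 1)) = 2 * exp (-z) := by
    rw [neg_sub, exp_sub, ofReal_div, ofReal_exp, ofReal_one, ofReal_ofNat]
    field_simp
    rw [← exp_add]
    simp
  rw [oscillatorCharFun, hexp]
  linear_combination (2 : ℂ) * sq_mul_expRemainderKernel z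

theorem oscillatorCharFun_neg_one : oscillatorCharFun (-1) = 0 := by
  simpa using oscillatorCharFun_sub_one 0

theorem re_le_neg_one_of_oscillatorCharFun_eq_zero {s : ℂ} (hs : oscillatorCharFun s = 0) :
    s.re ≤ -1 := by
  by_contra! hlt
  have hz : 0 < (s + 1).re := by simp; linarith
  have hz0 : s + 1 ≠ 0 := by rintro h; simp [h] at hz
  have hK : 1 - 2 * expRemainderKernel (s + 1) ≠ 0 := by
    intro h
    have hK : expRemainderKernel (s + 1) = 1 / 2 := by linear_combination -h / 2
    have := norm_expRemainderKernel_lt_half hz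
    simp [hK] at this
  refine mul_ne_zero (pow_ne_zero 2 hz0) hK ?_
  rwa [← oscillatorCharFun_sub_one, add_sub_cancel_right]

theorem isGreatest_re_oscillatorCharFun_zeros :
    IsGreatest {x : ℝ | ∃ s : ℂ, oscillatorCharFun s = 0 ∧ x = s.re} (-1) :=
  ⟨⟨-1, oscillatorCharFun_neg_one, by simp⟩,
    fun _ ⟨_, hs, hx⟩ => hx ▸ re_le_neg_one_of_oscillatorCharFun_eq_zero hs⟩

end

/-- Multiplicity-induced dominancy for the harmonic oscillator example: every
root `s ∈ ℂ` of `Δ(s) = s² + 1 - (2/e) e^{-s}` satisfies `Re s ≤ -1`;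
consequently the spectral abscissa `γ = sup {Re s : Δ(s) = 0}` equals `-1`,
and in particular `γ < 0`. -/
theorem oscillator_spectral_abscissa :
    (∀ s : ℂ,
        s ^ 2 + 1 - ((2 / Real.exp 1 : ℝ) : ℂ) * Complex.exp (-s) = 0 → s.re ≤ -1)
      ∧ sSup {x : ℝ | ∃ s : ℂ,
          s ^ 2 + 1 - ((2 / Real.exp 1 : ℝ) : ℂ) * Complex.exp (-s) = 0 ∧ x = s.re} = -1
      ∧ sSup {x : ℝ | ∃ s : ℂ,
          s ^ 2 + 1 - ((2 / Real.exp 1 : ℝ) : ℂ) * Complex.exp (-s) = 0 ∧ x = s.re} < 0 := by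
  have habscissa := isGreatest_re_oscillatorCharFun_zeros.csSup_eq
  exact ⟨fun _ => re_le_neg_one_of_oscillatorCharFun_eq_zero, habscissa, habscissa ▸ by norm_num⟩
end
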